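/- arXiv:1003.5059 — 2 statements merged into one kernel-verified Lean document; each statement's English description precedes it below -/
import Mathlib

section
/- Let φ be a holomorphic self-map of the unit disc belonging to the Dirichlet space. The composition operator C_φ is Hilbert–Schmidt on the Dirichlet space if and only if (1/π)∫_D |φ'(z)|²/(1-|φ(z)|²)² dA(z) < ∞, and this integral equals Σ_{n≥1} D(φⁿ)/n. -/
open MeasureTheory Metric ENNReal

/-! By the chain rule `(φⁿ⁺¹)' = (n+1) φⁿ φ'`, so `D(φⁿ⁺¹)/(n+1) = (n+1)/π ∫ |φ|²ⁿ |φ'|² dA`;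
summing under the integral (monotone convergence) with `∑ (n+1) xⁿ = (1-x)⁻²` at `x = |φ|²`
gives the identity. In the Hilbert–Schmidt sum the constant terms `|φ(0)|²ⁿ/(n+1)` are summable
since `|φ(0)| < 1`, and shifting the index changes the weights `1/(n+1)` by at most a factor 2. -/

namespace ENNReal

lemma tsum_ofReal_pow_ne_top {r : ℝ} (h0 : 0 ≤ r) (h1 : r < 1) :
    ∑' n : ℕ, ENNReal.ofReal (r ^ n) ≠ ∞ := by
  simp_rw [ENNReal.ofReal_pow h0]
  exact (tsum_geometric_lt_top.2 (ofReal_lt_one.2 h1)).ne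

lemma tsum_div_add_two_lt_top_iff (f : ℕ → ℝ≥0∞) :
    ∑' n : ℕ, f n / (n + 2) < ∞ ↔ ∑' n : ℕ, f n / (n + 1) < ∞ := by
  refine ⟨fun h => ?_, fun h => h.trans_le' <| ENNReal.tsum_le_tsum fun n =>
    ENNReal.div_le_div_left (by gcongr; norm_num) _⟩
  have hle : ∀ n : ℕ, f n / (n + 1) ≤ 2 * (f n / (n + 2)) := fun n => by
    calc f n / (n + 1) = 2 * f n / (2 * (n + 1)) :=
          (ENNReal.mul_div_mul_left _ _ two_ne_zero ofNat_ne_top).symm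
      _ ≤ 2 * f n / (n + 2) := by
          refine ENNReal.div_le_div_left ?_ _
          rw [two_mul, add_add_add_comm, one_add_one_eq_two]
          exact add_le_add le_add_self le_rfl
      _ = 2 * (f n / (n + 2)) := mul_div_assoc ..
  calc ∑' n : ℕ, f n / (n + 1) ≤ ∑' n : ℕ, 2 * (f n / (n + 2)) := ENNReal.tsum_le_tsum hle
    _ = 2 * ∑' n : ℕ, f n / (n + 2) := ENNReal.tsum_mul_left
    _ < ∞ := mul_lt_top ofNat_lt_top h

lemma tsum_add_div_lt_top_iff {A D : ℕ → ℝ≥0∞} (hA : ∑' n, A n ≠ ∞) :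
    ∑' n : ℕ, (A n + D n) / (n + 1) < ∞ ↔ ∑' n : ℕ, D n / (n + 1) < ∞ := by
  have hA' : ∑' n : ℕ, A n / (n + 1) < ∞ :=
    (ENNReal.tsum_le_tsum fun n =>
      ENNReal.div_le_of_le_mul (le_mul_of_one_le_right' le_add_self)).trans_lt hA.lt_top
  simp_rw [ENNReal.add_div, ENNReal.tsum_add, ENNReal.add_lt_top, hA', true_and]

lemma tsum_add_div_lt_top_iff_tsum_succ_div {A D : ℕ → ℝ≥0∞} (hA : ∑' n, A n ≠ ∞)
    (hD : D 0 = 0) :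
    ∑' n : ℕ, (A n + D n) / (n + 1) < ∞ ↔ ∑' n : ℕ, D (n + 1) / (n + 1) < ∞ := by
  rw [tsum_add_div_lt_top_iff hA, tsum_eq_zero_add' ENNReal.summable, hD, ENNReal.zero_div,
    zero_add, ← tsum_div_add_two_lt_top_iff]
  simp only [Nat.cast_add, Nat.cast_one, add_assoc, one_add_one_eq_two]

lemma tsum_add_one_mul_ofReal_pow_mul {x a : ℝ} (hx0 : 0 ≤ x) (hx1 : x < 1) (ha : 0 ≤ a) :
    ∑' n : ℕ, ((n : ℝ≥0∞) + 1) * ENNReal.ofReal (x ^ n * a)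
      = ENNReal.ofReal (a / (1 - x) ^ 2) := by
  have hsum : HasSum (fun n : ℕ => ((n : ℝ) + 1) * x ^ n * a) (a / (1 - x) ^ 2) := by
    have := (hasSum_choose_mul_geometric_of_norm_lt_one 1
      (by rwa [Real.norm_of_nonneg hx0])).mul_right a
    simpa [div_eq_inv_mul] using this
  rw [← hsum.tsum_eq, ENNReal.ofReal_tsum_of_nonneg (fun n => by positivity) hsum.summable]
  congr 1 with n
  rw [mul_assoc, ENNReal.ofReal_mul (p := (n : ℝ) + 1) (by positivity)]
  congr 1
  exact_mod_cast (ENNReal.ofReal_natCast (n + 1)).symm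

end ENNReal

lemma ofReal_norm_sq_deriv_pow_succ_div {φ : ℂ → ℂ} {z : ℂ} (hφ : DifferentiableAt ℂ φ z)
    (n : ℕ) :
    ENNReal.ofReal (‖deriv (fun w => φ w ^ (n + 1)) z‖ ^ 2) / (n + 1)
      = (n + 1) * ENNReal.ofReal ((‖φ z‖ ^ 2) ^ n * ‖deriv φ z‖ ^ 2) := by
  have hnorm : ‖((n + 1 : ℕ) : ℂ) * φ z ^ n * deriv φ z‖ ^ 2
      = ((n + 1 : ℕ) : ℝ) ^ 2 * ((‖φ z‖ ^ 2) ^ n * ‖deriv φ z‖ ^ 2) := by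
    simp only [norm_mul, norm_pow, RCLike.norm_natCast]
    ring
  rw [deriv_fun_pow hφ, Nat.add_sub_cancel, hnorm, ENNReal.ofReal_mul (by positivity),
    ENNReal.ofReal_pow (by positivity), ENNReal.ofReal_natCast, sq, mul_right_comm]
  push_cast
  exact ENNReal.mul_div_cancel_right (by positivity) (by simp)

lemma tsum_ofReal_norm_sq_deriv_pow_succ_div {φ : ℂ → ℂ} {z : ℂ} (hφ : DifferentiableAt ℂ φ z)
    (hz : ‖φ z‖ < 1) :
    ∑' n : ℕ, ENNReal.ofReal (‖deriv (fun w => φ w ^ (n + 1)) z‖ ^ 2) / (n + 1)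
      = ENNReal.ofReal (‖deriv φ z‖ ^ 2 / (1 - ‖φ z‖ ^ 2) ^ 2) := by
  simp_rw [ofReal_norm_sq_deriv_pow_succ_div hφ]
  exact ENNReal.tsum_add_one_mul_ofReal_pow_mul (by positivity)
    (pow_lt_one₀ (norm_nonneg _) hz two_ne_zero) (by positivity)

lemma setLIntegral_norm_sq_deriv_div_eq_tsum {φ : ℂ → ℂ} {U : Set ℂ} (hU : IsOpen U)
    (hφd : DifferentiableOn ℂ φ U) (hφm : Set.MapsTo φ U (ball 0 1)) :
    ∫⁻ z in U, ENNReal.ofReal (‖deriv φ z‖ ^ 2 / (1 - ‖φ z‖ ^ 2) ^ 2)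
      = ∑' n : ℕ,
          (∫⁻ z in U, ENNReal.ofReal (‖deriv (fun w => φ w ^ (n + 1)) z‖ ^ 2)) / (n + 1) := by
  have hdiv (n : ℕ) (f : ℂ → ℝ≥0∞) : (∫⁻ z in U, f z) / (n + 1) = ∫⁻ z in U, f z / (n + 1) := by
    simp_rw [div_eq_mul_inv]
    exact (lintegral_mul_const' _ _ (ENNReal.inv_ne_top.2 (by positivity))).symm
  simp_rw [hdiv]
  rw [← lintegral_tsum fun n =>
    ((measurable_deriv _).norm.pow_const 2).ennreal_ofReal.div_const _ |>.aemeasurable]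
  refine setLIntegral_congr_fun hU.measurableSet fun z hz => ?_
  exact (tsum_ofReal_norm_sq_deriv_pow_succ_div (hφd.differentiableAt (hU.mem_nhds hz))
    (mem_ball_zero_iff.1 (hφm hz))).symm

theorem hilbert_schmidt_dirichlet_iff_general (φ : ℂ → ℂ)
    (hφd : DifferentiableOn ℂ φ (ball (0:ℂ) 1))
    (hφm : Set.MapsTo φ (ball (0:ℂ) 1) (ball (0:ℂ) 1)) :
    ((∑' n : ℕ, (ENNReal.ofReal (‖φ 0‖ ^ (2 * n)) +
          ENNReal.ofReal (1 / Real.pi) * ∫⁻ z in ball (0:ℂ) 1,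
            ENNReal.ofReal (‖deriv (fun w => φ w ^ n) z‖ ^ 2)) / ((n : ℝ≥0∞) + 1)) < ⊤ ↔
        ENNReal.ofReal (1 / Real.pi) * (∫⁻ z in ball (0:ℂ) 1,
          ENNReal.ofReal (‖deriv φ z‖ ^ 2 / (1 - ‖φ z‖ ^ 2) ^ 2)) < ⊤) ∧
      ENNReal.ofReal (1 / Real.pi) * (∫⁻ z in ball (0:ℂ) 1,
          ENNReal.ofReal (‖deriv φ z‖ ^ 2 / (1 - ‖φ z‖ ^ 2) ^ 2)) =
        ∑' n : ℕ, (ENNReal.ofReal (1 / Real.pi) * ∫⁻ z in ball (0:ℂ) 1,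
          ENNReal.ofReal (‖deriv (fun w => φ w ^ (n + 1)) z‖ ^ 2)) / ((n : ℝ≥0∞) + 1) := by
  have heq := congrArg (ENNReal.ofReal (1 / Real.pi) * ·)
    (setLIntegral_norm_sq_deriv_div_eq_tsum isOpen_ball hφd hφm)
  simp only [← ENNReal.tsum_mul_left, ← mul_div_assoc] at heq
  refine ⟨?_, heq⟩
  have hφ0 : ‖φ 0‖ ^ 2 < 1 :=
    pow_lt_one₀ (norm_nonneg _) (mem_ball_zero_iff.1 (hφm (mem_ball_self one_pos))) two_ne_zero
  rw [heq, ENNReal.tsum_add_div_lt_top_iff_tsum_succ_div _ (by simp)]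
  simpa only [pow_mul] using ENNReal.tsum_ofReal_pow_ne_top (by positivity) hφ0

/-- `C_φ` is Hilbert–Schmidt on the Dirichlet space (i.e. the sum of the squared
Dirichlet norms of `C_φ(zⁿ/√(n+1))` is finite) iff
`(1/π)∫_D |φ'|²/(1-|φ|²)² dA < ∞`, and this integral equals `∑_{n≥1} D(φⁿ)/n`. -/
theorem hilbert_schmidt_dirichlet_iff (φ : ℂ → ℂ)
    (hφd : DifferentiableOn ℂ φ (ball (0:ℂ) 1))
    (hφm : Set.MapsTo φ (ball (0:ℂ) 1) (ball (0:ℂ) 1))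
    (hφD : IntegrableOn (fun z => ‖deriv φ z‖ ^ 2) (ball (0:ℂ) 1)) :
    ((∑' n : ℕ, (ENNReal.ofReal (‖φ 0‖ ^ (2 * n)) +
          ENNReal.ofReal (1 / Real.pi) * ∫⁻ z in ball (0:ℂ) 1,
            ENNReal.ofReal (‖deriv (fun w => φ w ^ n) z‖ ^ 2)) / ((n : ℝ≥0∞) + 1)) < ⊤ ↔
        ENNReal.ofReal (1 / Real.pi) * (∫⁻ z in ball (0:ℂ) 1,
          ENNReal.ofReal (‖deriv φ z‖ ^ 2 / (1 - ‖φ z‖ ^ 2) ^ 2)) < ⊤) ∧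
      ENNReal.ofReal (1 / Real.pi) * (∫⁻ z in ball (0:ℂ) 1,
          ENNReal.ofReal (‖deriv φ z‖ ^ 2 / (1 - ‖φ z‖ ^ 2) ^ 2)) =
        ∑' n : ℕ, (ENNReal.ofReal (1 / Real.pi) * ∫⁻ z in ball (0:ℂ) 1,
          ENNReal.ofReal (‖deriv (fun w => φ w ^ (n + 1)) z‖ ^ 2)) / ((n : ℝ≥0∞) + 1) :=
  hilbert_schmidt_dirichlet_iff_general φ hφd hφm
end

section
/- Let f be holomorphic on the unit disc with |Im f(z)| < π/4 for all z, and set φ = exp(-e^{-f}). Then φ maps the disc into itself, and there is an absolute constant C such that |φ'(z)|²/(1-|φ(z)|²)² ≤ C |f'(z)|² for all z in the disc. Consequently, if f has finite Dirichlet integral then ∫_D |φ'|²/(1-|φ|²)² dA < ∞, i.e. C_φ is Hilbert–Schmidt on the Dirichlet space. -/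
open MeasureTheory Metric

/-- Key elementary inequality: `s² e^{-s} ≤ 2 (1 - e^{-s})²` for `s > 0`. -/
lemma hs_key_ineq (s : ℝ) (hs : 0 < s) :
    s ^ 2 * Real.exp (-s) ≤ 2 * (1 - Real.exp (-s)) ^ 2 := by
  have h1 : Real.exp (-s) ≤ (1 + s)⁻¹ := by
    rw [Real.exp_neg]
    have h2 : 1 + s ≤ Real.exp s := by linarith [Real.add_one_le_exp s]
    exact inv_anti₀ (by linarith) h2
  have h2 : s / (1 + s) ≤ 1 - Real.exp (-s) := by
    have : s / (1 + s) = 1 - (1 + s)⁻¹ := by field_simp; ring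
    rw [this]; linarith
  have h3 : (1 + s / 3) ^ 3 ≤ Real.exp s := by
    have hb := Real.add_one_le_exp (s / 3)
    calc (1 + s / 3) ^ 3 ≤ Real.exp (s / 3) ^ 3 := by
          apply pow_le_pow_left₀ (by linarith) (by linarith)
      _ = Real.exp s := by
          rw [← Real.exp_nat_mul]; ring_nf
  -- (1+s)² ≤ 2 e^s
  have h4 : (1 + s) ^ 2 ≤ 2 * Real.exp s := by
    nlinarith [sq_nonneg (s - 3), hs.le, mul_nonneg (mul_nonneg hs.le hs.le) hs.le]
  have hE : Real.exp (-s) = (Real.exp s)⁻¹ := Real.exp_neg s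
  have hEp : 0 < Real.exp s := Real.exp_pos s
  have h5 : (1 + s) ^ 2 * Real.exp (-s) ≤ 2 := by
    have hmul : Real.exp s * Real.exp (-s) = 1 := by rw [← Real.exp_add]; simp
    nlinarith [mul_le_mul_of_nonneg_right h4 (Real.exp_pos (-s)).le]
  have h6 : 0 ≤ s / (1 + s) := by positivity
  have h7 : (s / (1 + s)) ^ 2 ≤ (1 - Real.exp (-s)) ^ 2 := by
    apply pow_le_pow_left₀ h6 h2
  have h8 : s ^ 2 * Real.exp (-s) ≤ (1 + s) ^ 2 * Real.exp (-s) * (s / (1 + s)) ^ 2 := by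
    have : (1 + s) ^ 2 * Real.exp (-s) * (s / (1 + s)) ^ 2 = s ^ 2 * Real.exp (-s) := by
      field_simp
    rw [this]
  have h9 : (1 + s) ^ 2 * Real.exp (-s) * (s / (1 + s)) ^ 2 ≤ 2 * (1 - Real.exp (-s)) ^ 2 := by
    have hx : 0 ≤ (1 + s) ^ 2 * Real.exp (-s) := by positivity
    calc (1 + s) ^ 2 * Real.exp (-s) * (s / (1 + s)) ^ 2
        ≤ (1 + s) ^ 2 * Real.exp (-s) * (1 - Real.exp (-s)) ^ 2 := by
          exact mul_le_mul_of_nonneg_left h7 hx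
      _ ≤ 2 * (1 - Real.exp (-s)) ^ 2 := by
          exact mul_le_mul_of_nonneg_right h5 (sq_nonneg _)
  linarith

/-- If `f` is holomorphic on the disc with `|Im f| < π/4`, then
`φ = exp(-e^{-f})` maps the disc into itself and
`|φ'|²/(1-|φ|²)² ≤ C|f'|²` pointwise with an absolute constant `C`; hence if
`f` has finite Dirichlet integral then `∫_D |φ'|²/(1-|φ|²)² dA < ∞`,
i.e. `C_φ` is Hilbert–Schmidt on the Dirichlet space. -/
theorem hilbert_schmidt_exp_construction :
    ∃ C : ℝ, 0 < C ∧
      ∀ f : ℂ → ℂ, DifferentiableOn ℂ f (ball (0:ℂ) 1) →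
        (∀ z ∈ ball (0:ℂ) 1, |(f z).im| < Real.pi / 4) →
        Set.MapsTo (fun z => Complex.exp (-Complex.exp (-f z)))
            (ball (0:ℂ) 1) (ball (0:ℂ) 1) ∧
          (∀ z ∈ ball (0:ℂ) 1,
            ‖deriv (fun w => Complex.exp (-Complex.exp (-f w))) z‖ ^ 2 /
                (1 - ‖Complex.exp (-Complex.exp (-f z))‖ ^ 2) ^ 2 ≤
              C * ‖deriv f z‖ ^ 2) ∧
          (IntegrableOn (fun z => ‖deriv f z‖ ^ 2) (ball (0:ℂ) 1) →
            IntegrableOn (fun z =>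
              ‖deriv (fun w => Complex.exp (-Complex.exp (-f w))) z‖ ^ 2 /
                (1 - ‖Complex.exp (-Complex.exp (-f z))‖ ^ 2) ^ 2)
              (ball (0:ℂ) 1)) := by
  refine ⟨2, by norm_num, fun f hf hb => ?_⟩
  set B : Set ℂ := ball (0:ℂ) 1 with hB
  -- basic pointwise facts
  have hcos : ∀ z ∈ B, (1:ℝ)/2 ≤ Real.cos (f z).im := by
    intro z hz
    have h1 : Real.cos (Real.pi/4) ≤ Real.cos |(f z).im| := by
      apply Real.cos_le_cos_of_nonneg_of_le_pi (abs_nonneg _)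
      · linarith [Real.pi_pos]
      · exact (hb z hz).le
    rw [Real.cos_abs, Real.cos_pi_div_four] at h1
    have h2 : (1:ℝ) ≤ Real.sqrt 2 := by
      rw [show (1:ℝ) = Real.sqrt 1 by simp]
      exact Real.sqrt_le_sqrt (by norm_num)
    linarith
  have htpos : ∀ z ∈ B, 0 < Real.exp (-(f z).re) * Real.cos (f z).im := by
    intro z hz
    exact mul_pos (Real.exp_pos _) (lt_of_lt_of_le (by norm_num) (hcos z hz))
  -- norm of φ
  have hφnorm : ∀ z : ℂ, ‖Complex.exp (-Complex.exp (-f z))‖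
      = Real.exp (-(Real.exp (-(f z).re) * Real.cos (f z).im)) := by
    intro z
    rw [Complex.norm_exp]
    congr 1
    rw [Complex.neg_re, Complex.exp_re, Complex.neg_re, Complex.neg_im, Real.cos_neg]
  -- MapsTo
  have hmaps : Set.MapsTo (fun z => Complex.exp (-Complex.exp (-f z))) B B := by
    intro z hz
    rw [hB, mem_ball_zero_iff]
    rw [hφnorm z]
    exact Real.exp_lt_one_iff.mpr (by linarith [htpos z hz])
  -- derivative of φ
  have hder : ∀ z ∈ B, HasDerivAt (fun w => Complex.exp (-Complex.exp (-f w)))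
      (Complex.exp (-Complex.exp (-f z)) * (Complex.exp (-f z) * deriv f z)) z := by
    intro z hz
    have hfz : DifferentiableAt ℂ f z :=
      hf.differentiableAt (isOpen_ball.mem_nhds hz)
    have h1 : HasDerivAt (fun w => -f w) (-deriv f z) z := hfz.hasDerivAt.neg
    have h2 : HasDerivAt (fun w => Complex.exp (-f w))
        (Complex.exp (-f z) * -deriv f z) z := h1.cexp
    have h3 : HasDerivAt (fun w => -Complex.exp (-f w))
        (-(Complex.exp (-f z) * -deriv f z)) z := h2.neg
    have h4 := h3.cexp
    have h5 : Complex.exp (-Complex.exp (-f z)) * (Complex.exp (-f z) * deriv f z) =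
        Complex.exp (-Complex.exp (-f z)) * -(Complex.exp (-f z) * -deriv f z) := by ring
    rw [h5]
    exact h4
  -- pointwise bound
  have hbound : ∀ z ∈ B,
      ‖deriv (fun w => Complex.exp (-Complex.exp (-f w))) z‖ ^ 2 /
          (1 - ‖Complex.exp (-Complex.exp (-f z))‖ ^ 2) ^ 2 ≤
        2 * ‖deriv f z‖ ^ 2 := by
    intro z hz
    set a := (f z).re
    set t := Real.exp (-(f z).re) * Real.cos (f z).im with hT
    have ht : 0 < t := htpos z hz
    have hderiv : deriv (fun w => Complex.exp (-Complex.exp (-f w))) z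
        = Complex.exp (-Complex.exp (-f z)) * (Complex.exp (-f z) * deriv f z) :=
      (hder z hz).deriv
    have hnum : ‖deriv (fun w => Complex.exp (-Complex.exp (-f w))) z‖
        = Real.exp (-t) * (Real.exp (-a) * ‖deriv f z‖) := by
      rw [hderiv, norm_mul, norm_mul, hφnorm z]
      congr 2
      rw [Complex.norm_exp, Complex.neg_re]
    rw [hnum, hφnorm z]
    set N := ‖deriv f z‖
    have hN : 0 ≤ N := norm_nonneg _
    have hE2 : Real.exp (-t) ^ 2 = Real.exp (-(2*t)) := by
      rw [sq, ← Real.exp_add]; ring_nf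
    have hElt : Real.exp (-(2*t)) < 1 := Real.exp_lt_one_iff.mpr (by linarith)
    have hden : 0 < (1 - Real.exp (-(2*t))) ^ 2 := pow_pos (by linarith) 2
    rw [hE2, div_le_iff₀ hden]
    have hkey := hs_key_ineq (2*t) (by linarith)
    have hea : Real.exp (-a) ≤ 2 * t := by
      have := hcos z hz
      have h0 : 0 < Real.exp (-a) := Real.exp_pos _
      have : Real.exp (-a) * (1/2) ≤ Real.exp (-a) * Real.cos (f z).im :=
        mul_le_mul_of_nonneg_left this h0.le
      rw [hT]; linarith
    have hea2 : Real.exp (-a) ^ 2 ≤ (2*t) ^ 2 :=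
      pow_le_pow_left₀ (Real.exp_pos _).le hea 2
    have hexpand : (Real.exp (-t) * (Real.exp (-a) * N)) ^ 2
        = Real.exp (-a) ^ 2 * Real.exp (-(2*t)) * N ^ 2 := by
      rw [← hE2]; ring
    rw [hexpand]
    have hEpos : 0 < Real.exp (-(2*t)) := Real.exp_pos _
    have step1 : Real.exp (-a) ^ 2 * Real.exp (-(2*t)) ≤ (2*t) ^ 2 * Real.exp (-(2*t)) :=
      mul_le_mul_of_nonneg_right hea2 hEpos.le
    have step2 : Real.exp (-a) ^ 2 * Real.exp (-(2*t)) ≤ 2 * (1 - Real.exp (-(2*t))) ^ 2 := by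
      linarith
    calc Real.exp (-a) ^ 2 * Real.exp (-(2*t)) * N ^ 2
        ≤ 2 * (1 - Real.exp (-(2*t))) ^ 2 * N ^ 2 :=
          mul_le_mul_of_nonneg_right step2 (sq_nonneg N)
      _ = 2 * N ^ 2 * (1 - Real.exp (-(2*t))) ^ 2 := by ring
  refine ⟨hmaps, hbound, ?_⟩
  -- integrability
  intro hint
  have hφdiff : DifferentiableOn ℂ (fun w => Complex.exp (-Complex.exp (-f w))) B := by
    intro z hz
    exact ((hder z hz).differentiableAt).differentiableWithinAt
  have hφa : AnalyticOnNhd ℂ (fun w => Complex.exp (-Complex.exp (-f w))) B :=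
    hφdiff.analyticOnNhd isOpen_ball
  have hφderivc : ContinuousOn (deriv (fun w => Complex.exp (-Complex.exp (-f w)))) B :=
    (hφa.deriv).continuousOn
  have hφc : ContinuousOn (fun z => Complex.exp (-Complex.exp (-f z))) B :=
    hφdiff.continuousOn
  have hdenc : ContinuousOn (fun z => (1 - ‖Complex.exp (-Complex.exp (-f z))‖ ^ 2) ^ 2) B := by
    apply ContinuousOn.pow
    exact (continuousOn_const.sub ((hφc.norm).pow 2))
  have hdenne : ∀ z ∈ B, (1 - ‖Complex.exp (-Complex.exp (-f z))‖ ^ 2) ^ 2 ≠ 0 := by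
    intro z hz
    have h1 : ‖Complex.exp (-Complex.exp (-f z))‖ < 1 := by
      have := hmaps hz
      rwa [hB, mem_ball_zero_iff] at this
    have h2 : ‖Complex.exp (-Complex.exp (-f z))‖ ^ 2 < 1 := by
      have h0 : 0 ≤ ‖Complex.exp (-Complex.exp (-f z))‖ := norm_nonneg _
      nlinarith
    exact pow_ne_zero 2 (ne_of_gt (by nlinarith))
  have hcont : ContinuousOn (fun z =>
      ‖deriv (fun w => Complex.exp (-Complex.exp (-f w))) z‖ ^ 2 /
        (1 - ‖Complex.exp (-Complex.exp (-f z))‖ ^ 2) ^ 2) B :=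
    ContinuousOn.div ((hφderivc.norm).pow 2) hdenc hdenne
  apply MeasureTheory.Integrable.mono' (hint.const_mul 2)
  · exact hcont.aestronglyMeasurable measurableSet_ball
  · rw [MeasureTheory.ae_restrict_iff' measurableSet_ball]
    filter_upwards with z hz
    have h1 := hbound z hz
    have h2 : 0 ≤ ‖deriv (fun w => Complex.exp (-Complex.exp (-f w))) z‖ ^ 2 /
        (1 - ‖Complex.exp (-Complex.exp (-f z))‖ ^ 2) ^ 2 := by positivity
    rw [Real.norm_eq_abs, abs_of_nonneg h2]
    exact h1
end
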